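/- arXiv:2303.08725 — 10 statements merged into one kernel-verified Lean document; each statement's English description precedes it below -/
import Mathlib

section
/- If the weighted digraph D(γ) of a scoring matrix γ contains a cycle of negative total weight, then there exists a sequence s over Σ such that the weighted edit distance dist_γ(s, s) is negative. -/
open List

/-- A scoring matrix on alphabet `σ`; `none` represents the space symbol `‐`.
The value at `(none, none)` is irrelevant (never used on admissible columns). -/
abbrev Scoring (σ : Type*) := Option σ → Option σ → ℝ

/-- `A` is an alignment of the sequences `s` and `t`: a list of columns over
`Σ₋ × Σ₋` with no column `(‐,‐)`, whose first (resp. second) components with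
spaces removed spell `s` (resp. `t`). -/
def IsAlignment {σ : Type*} (A : List (Option σ × Option σ)) (s t : List σ) : Prop :=
  (∀ c ∈ A, c ≠ ((none : Option σ), (none : Option σ))) ∧
  A.filterMap Prod.fst = s ∧ A.filterMap Prod.snd = t

/-- The score of an alignment: the sum of `γ` over its columns. -/
def alignScore {σ : Type*} (γ : Scoring σ) (A : List (Option σ × Option σ)) : ℝ :=
  (A.map fun c => γ c.1 c.2).sum

/-- The weighted edit distance: minimum alignment score. -/
noncomputable def editDist {σ : Type*} (γ : Scoring σ) (s t : List σ) : ℝ :=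
  sInf {x | ∃ A, IsAlignment A s t ∧ alignScore γ A = x}

/-- The normalized edit distance: minimum normalized alignment score
(score divided by number of columns); for `s = t = ε` it is `0`. -/
noncomputable def ndist {σ : Type*} (γ : Scoring σ) (s t : List σ) : ℝ :=
  sInf {x | ∃ A, IsAlignment A s t ∧ alignScore γ A / (A.length : ℝ) = x}

/-- A walk in the digraph `D(γ)`: a list of vertices of `Σ₋` in which the
space `‐` never follows the space. -/
def IsWalkSeq {σ : Type*} (W : List (Option σ)) : Prop :=
  W.Chain' (fun a b => ¬(a = none ∧ b = none))

/-- The weight of a walk: the sum of the weights of its consecutive arcs. -/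
def walkWeight {σ : Type*} (γ : Scoring σ) (W : List (Option σ)) : ℝ :=
  ((W.zip W.tail).map fun p => γ p.1 p.2).sum

/-- `D(γ)` has a cycle of negative total weight (cycles start and end at a
vertex of `Σ`). -/
def HasNegCycle {σ : Type*} (γ : Scoring σ) : Prop :=
  ∃ (a : σ) (W : List (Option σ)),
    IsWalkSeq (some a :: (W ++ [some a])) ∧
    walkWeight γ (some a :: (W ++ [some a])) < 0

/-- The shortest-walk distance from `x` to `y` in `D(γ)`. -/
noncomputable def walkDist {σ : Type*} (γ : Scoring σ) (x y : Option σ) : ℝ :=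
  sInf {w | ∃ W : List (Option σ), IsWalkSeq W ∧ W.head? = some x ∧
    W.getLast? = some y ∧ walkWeight γ W = w}

/-- A column of an extended alignment: a nonempty sequence over `Σ₋`, with at
least one non-space symbol, no two consecutive spaces, and not having a space
at both ends. -/
def IsExtCol {σ : Type*} (c : List (Option σ)) : Prop :=
  c ≠ [] ∧ (∃ x ∈ c, x ≠ none) ∧
  c.Chain' (fun a b => ¬(a = none ∧ b = none)) ∧
  ¬(c.head? = some none ∧ c.getLast? = some none)

/-- An extended alignment of `s, t`: a list of admissible columns whose first
symbols (spaces removed) spell `s` and whose last symbols spell `t`. -/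
def IsExtAlignment {σ : Type*} (E : List (List (Option σ))) (s t : List σ) : Prop :=
  (∀ c ∈ E, IsExtCol c) ∧
  E.filterMap (fun c => c.head?.bind id) = s ∧
  E.filterMap (fun c => c.getLast?.bind id) = t

/-- The extended edit distance: minimum total score over extended alignments,
where the score of a column is the sum of `γ` over its consecutive pairs. -/
noncomputable def edist {σ : Type*} (γ : Scoring σ) (s t : List σ) : ℝ :=
  sInf {x | ∃ E, IsExtAlignment E s t ∧ (E.map (walkWeight γ)).sum = x}

/-- `f` is a premetric: `f x x = 0` and `f x y ≥ 0`. -/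
def IsPremetric {σ : Type*} (f : List σ → List σ → ℝ) : Prop :=
  (∀ s, f s s = 0) ∧ (∀ s t, 0 ≤ f s t)

/-!
Read a negative cycle `a → x₁ → ⋯ → xₖ → a` of `D(γ)` column by column: its arcs form an
alignment of `a u` with `u a`, where `u` is `x₁ ⋯ xₖ` with the spaces removed, and its score
is the weight `w < 0` of the cycle. Stacking `m` copies aligns `(a u)ᵐ` with `(u a)ᵐ`, and a
leading column `(‐, a)` together with a trailing column `(a, ‐)` turns this into an alignment
of `(a u)ᵐ a = a (u a)ᵐ` with itself, of score `γ(‐, a) + m w + γ(a, ‐) < 0` for large `m`.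
The infimum defining `dist_γ` is over a set bounded below (so `sInf` is not a junk value),
because alignments of fixed sequences have bounded length and use finitely many columns.
-/

lemma flatten_replicate_append_append {α : Type*} (l₁ l₂ : List α) (m : ℕ) :
    (replicate m (l₁ ++ l₂)).flatten ++ l₁ = l₁ ++ (replicate m (l₂ ++ l₁)).flatten := by
  induction m with
  | zero => simp
  | succ m ih => simp [replicate_succ, ih]

section

variable {σ : Type*}

namespace IsAlignment

variable {A B : List (Option σ × Option σ)} {s t s' t' : List σ}

lemma length_le (h : IsAlignment A s t) : A.length ≤ s.length + t.length := by
  obtain ⟨hA, rfl, rfl⟩ := h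
  induction A with
  | nil => simp
  | cons c A ih =>
    obtain ⟨x, y⟩ := c
    have hxy := hA (x, y) mem_cons_self
    have := ih fun c hc => hA c (mem_cons_of_mem _ hc)
    cases x <;> cases y <;> simp_all <;> omega

lemma mem_of_mem (h : IsAlignment A s t) {c : Option σ × Option σ} (hc : c ∈ A) :
    c.1 ∈ none :: s.map some ∧ c.2 ∈ none :: t.map some := by
  obtain ⟨-, rfl, rfl⟩ := h
  obtain ⟨x, y⟩ := c
  constructor
  · cases x with
    | none => exact mem_cons_self
    | some x => exact mem_cons_of_mem _ (mem_map_of_mem (mem_filterMap.2 ⟨_, hc, rfl⟩))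
  · cases y with
    | none => exact mem_cons_self
    | some y => exact mem_cons_of_mem _ (mem_map_of_mem (mem_filterMap.2 ⟨_, hc, rfl⟩))

lemma append (h : IsAlignment A s t) (h' : IsAlignment B s' t') :
    IsAlignment (A ++ B) (s ++ s') (t ++ t') := by
  obtain ⟨hA, rfl, rfl⟩ := h
  obtain ⟨hB, rfl, rfl⟩ := h'
  refine ⟨fun c hc => ?_, filterMap_append, filterMap_append⟩
  rcases mem_append.1 hc with hc | hc
  exacts [hA c hc, hB c hc]

lemma flatten_replicate (h : IsAlignment A s t) (m : ℕ) :
    IsAlignment (replicate m A).flatten (replicate m s).flatten (replicate m t).flatten := by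
  induction m with
  | zero => simp [IsAlignment]
  | succ m ih => simpa only [replicate_succ, flatten_cons] using h.append ih

lemma rotate_self {a : σ} {u : List σ} (h : IsAlignment B (a :: u) (u ++ [a])) (m : ℕ) :
    IsAlignment ((none, some a) :: ((replicate m B).flatten ++ [(some a, none)]))
      ((replicate m (a :: u)).flatten ++ [a]) ((replicate m (a :: u)).flatten ++ [a]) := by
  have hfirst : IsAlignment [((none : Option σ), some a)] [] [a] := by simp [IsAlignment]
  have hlast : IsAlignment [(some a, (none : Option σ))] [a] [] := by simp [IsAlignment]
  have key : (replicate m (a :: u)).flatten ++ [a] = a :: (replicate m (u ++ [a])).flatten :=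
    flatten_replicate_append_append [a] u m
  simpa [← key] using hfirst.append ((h.flatten_replicate m).append hlast)

end IsAlignment

lemma isAlignment_zip_of_forall₂ {V V' : List (Option σ)}
    (h : Forall₂ (fun a b => ¬(a = none ∧ b = none)) V V') :
    IsAlignment (V.zip V') V.reduceOption V'.reduceOption := by
  have hlen := h.length_eq
  refine ⟨fun c hc hnone => forall₂_zip h hc (by simp [hnone]), ?_, ?_⟩
  · conv_rhs => rw [← map_fst_zip hlen.le, reduceOption, filterMap_map]
    rfl
  · conv_rhs => rw [← map_snd_zip hlen.ge, reduceOption, filterMap_map]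
    rfl

lemma isAlignment_of_isWalkSeq_cycle {a : σ} {W : List (Option σ)}
    (h : IsWalkSeq (some a :: (W ++ [some a]))) :
    IsAlignment ((some a :: W).zip (W ++ [some a])) (a :: W.reduceOption)
      (W.reduceOption ++ [a]) := by
  simpa [reduceOption_append] using
    isAlignment_zip_of_forall₂ (isChain_cons_append_singleton_iff_forall₂.1 h)

variable (γ : Scoring σ)

lemma walkWeight_cons_append_singleton (x y : Option σ) (W : List (Option σ)) :
    walkWeight γ (x :: (W ++ [y])) = alignScore γ ((x :: W).zip (W ++ [y])) := by
  have hzip : (x :: W ++ [y]).zip (W ++ [y]) = (x :: W).zip (W ++ [y]) := by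
    simpa using zip_append (l₁ := x :: W) (l₂ := W ++ [y]) (r₁ := [y]) (r₂ := []) (by simp)
  rw [walkWeight, tail_cons, ← cons_append, hzip, alignScore]

lemma bddBelow_alignScore (s t : List σ) :
    BddBelow {x | ∃ A, IsAlignment A s t ∧ alignScore γ A = x} := by
  obtain ⟨M, hM⟩ := ((none :: s.map some).finite_toSet.image2 (fun x y => γ x y)
    (none :: t.map some).finite_toSet).bddBelow
  refine ⟨(s.length + t.length : ℕ) * min M 0, ?_⟩
  rintro x ⟨A, hA, rfl⟩
  have hcol : ∀ r ∈ A.map fun c => γ c.1 c.2, min M 0 ≤ r := by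
    simp only [mem_map]
    rintro r ⟨c, hc, rfl⟩
    obtain ⟨h1, h2⟩ := hA.mem_of_mem hc
    exact (min_le_left _ _).trans (hM (Set.mem_image2_of_mem h1 h2))
  calc ((s.length + t.length : ℕ) : ℝ) * min M 0
      ≤ A.length * min M 0 :=
        mul_le_mul_of_nonpos_right (by exact_mod_cast hA.length_le) (min_le_right _ _)
    _ ≤ alignScore γ A := by
        simpa [alignScore, nsmul_eq_mul] using card_nsmul_le_sum _ _ hcol

lemma editDist_le_alignScore {A : List (Option σ × Option σ)} {s t : List σ}
    (h : IsAlignment A s t) : editDist γ s t ≤ alignScore γ A :=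
  csInf_le (bddBelow_alignScore γ s t) ⟨A, h, rfl⟩

end

theorem stmt0_general {σ : Type*} (γ : Scoring σ) (h : HasNegCycle γ) :
    ∃ s : List σ, editDist γ s s < 0 := by
  obtain ⟨a, W, hwalk, hneg⟩ := h
  set w := walkWeight γ (some a :: (W ++ [some a]))
  obtain ⟨m, hm⟩ := exists_nat_gt ((γ none (some a) + γ (some a) none) / -w)
  rw [div_lt_iff₀ (neg_pos.2 hneg)] at hm
  refine ⟨(replicate m (a :: W.reduceOption)).flatten ++ [a], ?_⟩
  calc _ ≤ _ := editDist_le_alignScore γ ((isAlignment_of_isWalkSeq_cycle hwalk).rotate_self m)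
    _ = γ none (some a) + m * w + γ (some a) none := by
        simp only [alignScore, map_cons, map_append, map_flatten, map_replicate, map_nil,
          sum_cons, sum_append, sum_flatten, sum_replicate, nsmul_eq_mul, sum_nil, add_zero,
          walkWeight_cons_append_singleton, w]
        ring
    _ < 0 := by linarith

theorem stmt0 {σ : Type*} [Fintype σ] (γ : Scoring σ) (h : HasNegCycle γ) :
    ∃ s : List σ, editDist γ s s < 0 :=
  stmt0_general γ h
end

section
/- For every scoring matrix γ: dist_γ(s,t) ≥ 0 for all s,t ∈ Σ* if and only if γ(a,‐) ≥ 0, γ(‐,b) ≥ 0, and γ(a,b) ≥ 0 for all a,b ∈ Σ. -/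
open List

/-!
Necessity: the only alignments of `[a]` with `[]`, of `[]` with `[b]` and of `[a]` with `[b]` are
the obvious ones, so these distances are `γ(a,‐)`, `γ(‐,b)` and `min (γ(a,b)) (γ(a,‐) + γ(‐,b))`.
Sufficiency: every alignment score is a sum of entries of `γ` off `(‐,‐)`.
-/

section

variable {σ : Type*} {A : List (Option σ × Option σ)}

@[simp] lemma isAlignment_nil {s t : List σ} : IsAlignment [] s t ↔ s = [] ∧ t = [] := by
  simp [IsAlignment, eq_comm]

lemma isAlignment_cons {c : Option σ × Option σ} {s t : List σ} :
    IsAlignment (c :: A) s t ↔ c ≠ (none, none) ∧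
      ∃ s' t', IsAlignment A s' t' ∧ s = c.1.toList ++ s' ∧ t = c.2.toList ++ t' := by
  obtain ⟨x, y⟩ := c
  cases x <;> cases y <;> simp [IsAlignment] <;> aesop

lemma isAlignment_nil_nil_iff : IsAlignment A [] [] ↔ A = [] := by
  cases A with
  | nil => simp
  | cons c A => obtain ⟨x, y⟩ := c; cases x <;> cases y <;> simp [isAlignment_cons]

lemma isAlignment_singleton_nil_iff {a : σ} :
    IsAlignment A [a] [] ↔ A = [(some a, none)] := by
  cases A with
  | nil => simp
  | cons c A =>
    obtain ⟨x, y⟩ := c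
    cases x <;> cases y <;> simp [isAlignment_cons, isAlignment_nil_nil_iff, eq_comm, and_comm]

lemma isAlignment_nil_singleton_iff {b : σ} :
    IsAlignment A [] [b] ↔ A = [(none, some b)] := by
  cases A with
  | nil => simp
  | cons c A =>
    obtain ⟨x, y⟩ := c
    cases x <;> cases y <;> simp [isAlignment_cons, isAlignment_nil_nil_iff, eq_comm, and_comm]

lemma isAlignment_singleton_singleton_iff {a b : σ} :
    IsAlignment A [a] [b] ↔ A = [(some a, some b)] ∨ A = [(some a, none), (none, some b)] ∨
      A = [(none, some b), (some a, none)] := by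
  cases A with
  | nil => simp
  | cons c A =>
    obtain ⟨x, y⟩ := c
    cases x <;> cases y <;>
      simp [isAlignment_cons, isAlignment_nil_nil_iff, isAlignment_singleton_nil_iff,
        isAlignment_nil_singleton_iff, eq_comm, and_comm]

lemma editDist_nonneg {γ : Scoring σ} (hγ : ∀ x y, (x, y) ≠ (none, none) → 0 ≤ γ x y)
    (s t : List σ) : 0 ≤ editDist γ s t := by
  refine Real.sInf_nonneg ?_
  rintro _ ⟨A, ⟨hA, -, -⟩, rfl⟩
  refine List.sum_nonneg ?_
  simp only [List.mem_map]
  rintro _ ⟨c, hc, rfl⟩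
  exact hγ c.1 c.2 (hA c hc)

lemma editDist_singleton_nil (γ : Scoring σ) (a : σ) : editDist γ [a] [] = γ (some a) none := by
  have hscores : {x | ∃ A, IsAlignment A [a] [] ∧ alignScore γ A = x} = {γ (some a) none} := by
    ext
    simp [isAlignment_singleton_nil_iff, alignScore, eq_comm]
  rw [editDist, hscores, csInf_singleton]

lemma editDist_nil_singleton (γ : Scoring σ) (b : σ) : editDist γ [] [b] = γ none (some b) := by
  have hscores : {x | ∃ A, IsAlignment A [] [b] ∧ alignScore γ A = x} = {γ none (some b)} := by
    ext
    simp [isAlignment_nil_singleton_iff, alignScore, eq_comm]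
  rw [editDist, hscores, csInf_singleton]

lemma editDist_singleton_singleton (γ : Scoring σ) (a b : σ) :
    editDist γ [a] [b] = min (γ (some a) (some b)) (γ (some a) none + γ none (some b)) := by
  have hscores : {x | ∃ A, IsAlignment A [a] [b] ∧ alignScore γ A = x} =
      {γ (some a) (some b), γ (some a) none + γ none (some b)} := by
    ext
    simp only [isAlignment_singleton_singleton_iff, alignScore]
    aesop (add norm add_comm)
  rw [editDist, hscores, csInf_pair]

end

theorem stmt2_general {σ : Type*} (γ : Scoring σ) :
    (∀ s t : List σ, 0 ≤ editDist γ s t) ↔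
      (∀ a b : σ, 0 ≤ γ (some a) none ∧ 0 ≤ γ none (some b) ∧ 0 ≤ γ (some a) (some b)) := by
  constructor
  · intro h a b
    refine ⟨?_, ?_, ?_⟩
    · simpa only [editDist_singleton_nil] using h [a] []
    · simpa only [editDist_nil_singleton] using h [] [b]
    · have hmatch := h [a] [b]
      rw [editDist_singleton_singleton] at hmatch
      exact (le_min_iff.mp hmatch).1
  · intro h
    refine editDist_nonneg fun x y hxy => ?_
    match x, y with
    | none, none => exact absurd rfl hxy
    | some a, none => exact (h a a).1
    | none, some b => exact (h b b).2.1
    | some a, some b => exact (h a b).2.2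

theorem stmt2 {σ : Type*} [Fintype σ] (γ : Scoring σ) :
    (∀ s t : List σ, 0 ≤ editDist γ s t) ↔
      (∀ a b : σ, 0 ≤ γ (some a) none ∧ 0 ≤ γ none (some b) ∧ 0 ≤ γ (some a) (some b)) :=
  stmt2_general γ
end

section
/- For every scoring matrix γ: dist_γ(s,t) > 0 for all s ≠ t in Σ* if and only if (i) γ(a,a) ≥ 0 for every a ∈ Σ, and (ii) γ(a,b) > 0 for all distinct a,b ∈ Σ, and γ(a,‐) > 0, γ(‐,b) > 0 for all a,b ∈ Σ. -/
open List

lemma align_pos {σ : Type*} (γ : Scoring σ) {s t : List σ}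
    (h : 0 < editDist γ s t) {A : List (Option σ × Option σ)}
    (hA : IsAlignment A s t) : 0 < alignScore γ A := by
  set S := {x | ∃ A, IsAlignment A s t ∧ alignScore γ A = x} with hS
  have hmem : alignScore γ A ∈ S := ⟨A, hA, rfl⟩
  have hbdd : BddBelow S := by
    by_contra hb
    rw [editDist, ← hS, Real.sInf_of_not_bddBelow hb] at h
    exact lt_irrefl _ h
  have := csInf_le hbdd hmem
  rw [editDist, ← hS] at h
  linarith

lemma rep_fst {σ : Type*} (a : σ) (n : ℕ) :
    (List.replicate n ((some a : Option σ), (some a : Option σ))).filterMap Prod.fst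
      = List.replicate n a := by
  induction n with
  | zero => simp
  | succ n ih => simp [List.replicate_succ, ih]

lemma rep_snd {σ : Type*} (a : σ) (n : ℕ) :
    (List.replicate n ((some a : Option σ), (some a : Option σ))).filterMap Prod.snd
      = List.replicate n a := by
  induction n with
  | zero => simp
  | succ n ih => simp [List.replicate_succ, ih]

theorem stmt3 {σ : Type*} [Fintype σ] (γ : Scoring σ) :
    (∀ s t : List σ, s ≠ t → 0 < editDist γ s t) ↔
      ((∀ a : σ, 0 ≤ γ (some a) (some a)) ∧
       (∀ a b : σ, a ≠ b → 0 < γ (some a) (some b)) ∧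
       (∀ a : σ, 0 < γ (some a) none) ∧
       (∀ b : σ, 0 < γ none (some b))) := by
  classical
  constructor
  · intro h
    have key : ∀ (s t : List σ), s ≠ t → ∀ A, IsAlignment A s t → 0 < alignScore γ A :=
      fun s t hst A hA => align_pos γ (h s t hst) hA
    have hms : ∀ a : σ, 0 < γ (some a) none := by
      intro a
      have := key [a] [] (by simp) [(some a, none)]
        ⟨by simp, by simp [List.filterMap], by simp [List.filterMap]⟩
      simpa [alignScore] using this
    have hmt : ∀ b : σ, 0 < γ none (some b) := by
      intro b
      have := key [] [b] (by simp) [(none, some b)]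
        ⟨by simp, by simp [List.filterMap], by simp [List.filterMap]⟩
      simpa [alignScore] using this
    refine ⟨?_, ?_, hms, hmt⟩
    · intro a
      by_contra hneg
      push_neg at hneg
      obtain ⟨n, hn⟩ := exists_nat_gt (γ (some a) none / (-γ (some a) (some a)))
      have hn' : n * γ (some a) (some a) + γ (some a) none < 0 := by
        have h0 : (0:ℝ) < -γ (some a) (some a) := by linarith
        have := (div_lt_iff₀ h0).mp hn
        linarith
      set A := List.replicate n ((some a : Option σ), (some a : Option σ)) ++ [(some a, none)]
        with hAdef
      have hAl : IsAlignment A (List.replicate n a ++ [a]) (List.replicate n a) := by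
        refine ⟨?_, ?_, ?_⟩
        · intro c hc
          rcases List.mem_append.mp hc with hc | hc
          · have := List.eq_of_mem_replicate hc; simp [this]
          · simp at hc; simp [hc]
        · simp [hAdef, List.filterMap_append, rep_fst, List.filterMap]
        · simp [hAdef, List.filterMap_append, rep_snd, List.filterMap]
      have hne : (List.replicate n a ++ [a]) ≠ List.replicate n a := by
        intro hh
        have := congrArg List.length hh
        simp at this
      have hpos := key _ _ hne A hAl
      have hscore : alignScore γ A = n * γ (some a) (some a) + γ (some a) none := by
        simp [alignScore, hAdef, List.map_replicate, List.sum_replicate, nsmul_eq_mul]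
      rw [hscore] at hpos
      linarith
    · intro a b hab
      have := key [a] [b] (by simp [hab]) [(some a, some b)]
        ⟨by simp, by simp [List.filterMap], by simp [List.filterMap]⟩
      simpa [alignScore] using this
  · rintro ⟨h1, h2, h3, h4⟩ s t hst
    rcases isEmpty_or_nonempty σ with hF | hF
    · exfalso
      have hs : s = [] := by cases s with | nil => rfl | cons a _ => exact (hF.false a).elim
      have ht : t = [] := by cases t with | nil => rfl | cons a _ => exact (hF.false a).elim
      exact hst (hs.trans ht.symm)
    · set F : Finset ℝ := Finset.image (fun p : Option σ × Option σ => γ p.1 p.2)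
        (Finset.univ.filter fun p => p.1 ≠ p.2) with hFdef
      have hFne : F.Nonempty := by
        obtain ⟨a⟩ := hF
        exact ⟨γ (some a) none, Finset.mem_image.mpr ⟨(some a, none),
          Finset.mem_filter.mpr ⟨Finset.mem_univ _, by simp⟩, rfl⟩⟩
      set δ := F.min' hFne with hδdef
      have hδpos : 0 < δ := by
        obtain ⟨p, hp, hpe⟩ := Finset.mem_image.mp (F.min'_mem hFne)
        have hpne : p.1 ≠ p.2 := (Finset.mem_filter.mp hp).2
        rw [hδdef, ← hpe]
        match p, hpne with
        | (none, none), hpne => exact absurd rfl hpne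
        | (none, some b), _ => exact h4 b
        | (some a, none), _ => exact h3 a
        | (some a, some b), hpne => exact h2 a b (by simpa using hpne)
      have hδle : ∀ c : Option σ × Option σ, c.1 ≠ c.2 → δ ≤ γ c.1 c.2 := by
        intro c hc
        exact F.min'_le _ (Finset.mem_image.mpr ⟨c,
          Finset.mem_filter.mpr ⟨Finset.mem_univ _, hc⟩, rfl⟩)
      -- every alignment score is at least δ
      have hlow : ∀ A, IsAlignment A s t → δ ≤ alignScore γ A := by
        rintro A ⟨hadm, hfst, hsnd⟩
        have hex : ∃ c ∈ A, c.1 ≠ c.2 := by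
          by_contra hc
          push_neg at hc
          apply hst
          rw [← hfst, ← hsnd]
          exact List.filterMap_congr (fun c hcA => hc c hcA)
        obtain ⟨c, hcA, hcne⟩ := hex
        have hnn : ∀ x ∈ A.map (fun c => γ c.1 c.2), 0 ≤ x := by
          intro x hx
          obtain ⟨d, hdA, rfl⟩ := List.mem_map.mp hx
          by_cases hd : d.1 = d.2
          · match d, hd, hadm d hdA with
            | (none, none), _, hadmd => exact absurd rfl hadmd
            | (some a, some b), hd, _ =>
                have : a = b := by simpa using hd
                subst this; exact h1 a
          · exact le_of_lt (lt_of_lt_of_le hδpos (hδle d hd))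
        have hmem : γ c.1 c.2 ∈ A.map (fun c => γ c.1 c.2) :=
          List.mem_map.mpr ⟨c, hcA, rfl⟩
        calc δ ≤ γ c.1 c.2 := hδle c hcne
          _ ≤ (A.map (fun c => γ c.1 c.2)).sum := List.single_le_sum hnn _ hmem
      -- the set of scores is nonempty
      have hSne : ∃ x, ∃ A, IsAlignment A s t ∧ alignScore γ A = x := by
        refine ⟨_, s.map (fun a => ((some a : Option σ), (none : Option σ)))
          ++ t.map (fun b => ((none : Option σ), (some b : Option σ))), ⟨?_, ?_, ?_⟩, rfl⟩
        · intro c hc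
          rcases List.mem_append.mp hc with hc | hc <;>
            · obtain ⟨x, _, rfl⟩ := List.mem_map.mp hc; simp
        · simp [List.filterMap_append, List.filterMap_map, Function.comp_def]
        · simp [List.filterMap_append, List.filterMap_map, Function.comp_def]
      have : δ ≤ editDist γ s t := by
        apply le_csInf hSne
        rintro x ⟨A, hA, rfl⟩
        exact hlow A hA
      linarith
end

section
/- Let γ be a scoring matrix and Q a real number satisfying, for all a,b,c ∈ Σ: γ(a,‐) ≤ γ(a,b) + γ(b,‐); γ(‐,a) ≤ γ(‐,b) + γ(b,a); min{γ(a,c), γ(a,‐)+γ(‐,c)} ≤ γ(a,b)+γ(b,c); and γ(b,‐)+γ(‐,b) ≥ Q. Then for any sequences s,t,u ∈ Σ*, any alignment A of (s,t) and any alignment B of (t,u), there exist an alignment C of (s,u) and an integer k ≥ 0 such that score_γ(A) + score_γ(B) ≥ score_γ(C) + kQ, |A| ≤ |C| + k, and |B| ≤ |C| + k. -/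
open List

private theorem key {σ : Type*} (γ : Scoring σ) (Q : ℝ)
    (h1 : ∀ a b : σ, γ (some a) none ≤ γ (some a) (some b) + γ (some b) none)
    (h2 : ∀ a b : σ, γ none (some a) ≤ γ none (some b) + γ (some b) (some a))
    (h3 : ∀ a b c : σ,
      min (γ (some a) (some c)) (γ (some a) none + γ none (some c)) ≤
        γ (some a) (some b) + γ (some b) (some c))
    (h4 : ∀ b : σ, Q ≤ γ (some b) none + γ none (some b)) :
    ∀ (n : ℕ) (A B : List (Option σ × Option σ)) (s t u : List σ),
      A.length + B.length ≤ n → IsAlignment A s t → IsAlignment B t u →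
      ∃ (C : List (Option σ × Option σ)) (k : ℕ), IsAlignment C s u ∧
        alignScore γ C + (k : ℝ) * Q ≤ alignScore γ A + alignScore γ B ∧
        A.length ≤ C.length + k ∧ B.length ≤ C.length + k := by
  intro n
  induction n with
  | zero =>
    intro A B s t u hlen hA hB
    obtain ⟨hA1, hA2, hA3⟩ := hA
    obtain ⟨hB1, hB2, hB3⟩ := hB
    have hAe : A = [] := by cases A <;> simp_all
    have hBe : B = [] := by cases B <;> simp_all
    subst hAe hBe
    simp [List.filterMap] at hA2 hB3
    subst hA2 hB3
    exact ⟨[], 0, ⟨by simp, by simp, by simp⟩, by simp [alignScore], by simp, by simp⟩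
  | succ n ih =>
    intro A B s t u hlen hA hB
    obtain ⟨hA1, hA2, hA3⟩ := hA
    obtain ⟨hB1, hB2, hB3⟩ := hB
    rcases A with _ | ⟨⟨ax, ay⟩, A'⟩
    · -- A = [], so s = [], t = []
      simp at hA2 hA3
      subst hA2; subst hA3
      rcases B with _ | ⟨⟨bx, by'⟩, B'⟩
      · simp at hB3; subst hB3
        exact ⟨[], 0, ⟨by simp, by simp, by simp⟩, by simp [alignScore], by simp, by simp⟩
      · -- bx must be none
        rcases bx with _ | b
        · rcases by' with _ | c
          · exact absurd rfl (hB1 (none, none) (by simp))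
          · simp [List.filterMap_cons] at hB2 hB3
            subst hB3
            obtain ⟨C', k', hC', hsc, hl1, hl2⟩ := ih [] B' [] [] (B'.filterMap Prod.snd)
              (by simp at hlen ⊢; omega)
              ⟨by simp, by simp, by simp⟩
              ⟨fun c hc => hB1 c (by simp [hc]), by simpa using hB2, rfl⟩
            obtain ⟨hC1, hC2, hC3⟩ := hC'
            refine ⟨(none, some c) :: C', k', ⟨?_, ?_, ?_⟩, ?_, ?_, ?_⟩
            · intro x hx; rcases List.mem_cons.mp hx with hx | hx; · simp [hx]
              · exact hC1 x hx
            · simpa [List.filterMap_cons] using hC2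
            · simp [List.filterMap_cons, hC3]
            · simp only [alignScore, List.map_cons, List.sum_cons] at hsc ⊢
              linarith
            · simp only [List.length_cons, List.length_nil] at hl1 ⊢; omega
            · simp only [List.length_cons, List.length_nil] at hl2 ⊢; omega
        · simp [List.filterMap_cons] at hB2
    · -- A = (ax, ay) :: A'
      rcases ay with _ | b
      · -- A head is (some a, none)
        rcases ax with _ | a
        · exact absurd rfl (hA1 (none, none) (by simp))
        · simp [List.filterMap_cons] at hA2 hA3
          subst hA2
          obtain ⟨C', k', hC', hsc, hl1, hl2⟩ := ih A' B (A'.filterMap Prod.fst) t u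
            (by simp at hlen ⊢; omega)
            ⟨fun c hc => hA1 c (by simp [hc]), rfl, hA3⟩
            ⟨hB1, hB2, hB3⟩
          obtain ⟨hC1, hC2, hC3⟩ := hC'
          refine ⟨(some a, none) :: C', k', ⟨?_, ?_, ?_⟩, ?_, ?_, ?_⟩
          · intro x hx; rcases List.mem_cons.mp hx with hx | hx; · simp [hx]
            · exact hC1 x hx
          · simp [List.filterMap_cons, hC2]
          · simpa [List.filterMap_cons] using hC3
          · simp only [alignScore, List.map_cons, List.sum_cons] at hsc ⊢
            linarith
          · simp only [List.length_cons, List.length_nil] at hl1 ⊢; omega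
          · simp only [List.length_cons, List.length_nil] at hl2 ⊢; omega
      · -- A head is (ax, some b), so t = b :: t₀
        simp [List.filterMap_cons] at hA3
        subst hA3
        set t₀ := A'.filterMap Prod.snd with ht₀def
        have ht₀ : A'.filterMap Prod.snd = t₀ := rfl
        rcases B with _ | ⟨⟨bx, by'⟩, B'⟩
        · simp at hB2
        · rcases bx with _ | b'
          · -- B head is (none, some c)
            rcases by' with _ | c
            · exact absurd rfl (hB1 (none, none) (by simp))
            · simp [List.filterMap_cons] at hB2 hB3
              subst hB3
              obtain ⟨C', k', hC', hsc, hl1, hl2⟩ := ih ((ax, some b) :: A') B' s (b :: t₀) (B'.filterMap Prod.snd)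
                (by simp at hlen ⊢; omega)
                ⟨hA1, hA2, by simp [List.filterMap_cons, ht₀]⟩
                ⟨fun c hc => hB1 c (by simp [hc]), hB2, rfl⟩
              obtain ⟨hC1, hC2, hC3⟩ := hC'
              refine ⟨(none, some c) :: C', k', ⟨?_, ?_, ?_⟩, ?_, ?_, ?_⟩
              · intro x hx; rcases List.mem_cons.mp hx with hx | hx; · simp [hx]
                · exact hC1 x hx
              · simpa [List.filterMap_cons] using hC2
              · simp [List.filterMap_cons, hC3]
              · simp only [alignScore, List.map_cons, List.sum_cons] at hsc ⊢
                linarith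
              · simp only [List.length_cons, List.length_nil] at hl1 ⊢; omega
              · simp only [List.length_cons, List.length_nil] at hl2 ⊢; omega
          · -- B head is (some b', by'); b' = b
            simp [List.filterMap_cons] at hB2
            obtain ⟨hbb, hB2'⟩ := hB2
            subst hbb
            rcases ax with _ | a
            · -- A head (none, some b)
              rcases by' with _ | c
              · -- B head (some b, none): k+1
                simp [List.filterMap_cons] at hB3
                obtain ⟨C', k', hC', hsc, hl1, hl2⟩ := ih A' B' s t₀ u
                  (by simp at hlen ⊢; omega)
                  ⟨fun c hc => hA1 c (by simp [hc]), by simpa using hA2, ht₀⟩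
                  ⟨fun c hc => hB1 c (by simp [hc]), hB2', hB3⟩
                refine ⟨C', k' + 1, hC', ?_, by simp; omega, by simp; omega⟩
                have := h4 b'
                simp only [alignScore, List.map_cons, List.sum_cons] at hsc ⊢
                push_cast
                linarith
              · -- B head (some b, some c): use h2
                simp [List.filterMap_cons] at hB3
                subst hB3
                obtain ⟨C', k', hC', hsc, hl1, hl2⟩ := ih A' B' s t₀ (B'.filterMap Prod.snd)
                  (by simp at hlen ⊢; omega)
                  ⟨fun c hc => hA1 c (by simp [hc]), by simpa using hA2, ht₀⟩
                  ⟨fun c hc => hB1 c (by simp [hc]), hB2', rfl⟩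
                obtain ⟨hC1, hC2, hC3⟩ := hC'
                refine ⟨(none, some c) :: C', k', ⟨?_, ?_, ?_⟩, ?_, ?_, ?_⟩
                · intro x hx; rcases List.mem_cons.mp hx with hx | hx; · simp [hx]
                  · exact hC1 x hx
                · simpa [List.filterMap_cons] using hC2
                · simp [List.filterMap_cons, hC3]
                · have := h2 c b'
                  simp only [alignScore, List.map_cons, List.sum_cons] at hsc ⊢
                  linarith
                · simp only [List.length_cons, List.length_nil] at hl1 ⊢; omega
                · simp only [List.length_cons, List.length_nil] at hl2 ⊢; omega
            · -- A head (some a, some b)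
              simp [List.filterMap_cons] at hA2
              subst hA2
              rcases by' with _ | c
              · -- B head (some b, none): use h1
                simp [List.filterMap_cons] at hB3
                obtain ⟨C', k', hC', hsc, hl1, hl2⟩ := ih A' B' (A'.filterMap Prod.fst) t₀ u
                  (by simp at hlen ⊢; omega)
                  ⟨fun c hc => hA1 c (by simp [hc]), rfl, ht₀⟩
                  ⟨fun c hc => hB1 c (by simp [hc]), hB2', hB3⟩
                obtain ⟨hC1, hC2, hC3⟩ := hC'
                refine ⟨(some a, none) :: C', k', ⟨?_, ?_, ?_⟩, ?_, ?_, ?_⟩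
                · intro x hx; rcases List.mem_cons.mp hx with hx | hx; · simp [hx]
                  · exact hC1 x hx
                · simp [List.filterMap_cons, hC2]
                · simpa [List.filterMap_cons] using hC3
                · have := h1 a b'
                  simp only [alignScore, List.map_cons, List.sum_cons] at hsc ⊢
                  linarith
                · simp only [List.length_cons, List.length_nil] at hl1 ⊢; omega
                · simp only [List.length_cons, List.length_nil] at hl2 ⊢; omega
              · -- B head (some b, some c): use h3
                simp [List.filterMap_cons] at hB3
                subst hB3
                obtain ⟨C', k', hC', hsc, hl1, hl2⟩ := ih A' B' (A'.filterMap Prod.fst) t₀ (B'.filterMap Prod.snd)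
                  (by simp at hlen ⊢; omega)
                  ⟨fun c hc => hA1 c (by simp [hc]), rfl, ht₀⟩
                  ⟨fun c hc => hB1 c (by simp [hc]), hB2', rfl⟩
                obtain ⟨hC1, hC2, hC3⟩ := hC'
                rcases le_total (γ (some a) (some c)) (γ (some a) none + γ none (some c)) with hle | hle
                · have hmin : γ (some a) (some c) ≤ γ (some a) (some b') + γ (some b') (some c) := by
                    have := h3 a b' c; rwa [min_eq_left hle] at this
                  refine ⟨(some a, some c) :: C', k', ⟨?_, ?_, ?_⟩, ?_, ?_, ?_⟩
                  · intro x hx; rcases List.mem_cons.mp hx with hx | hx; · simp [hx]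
                    · exact hC1 x hx
                  · simp [List.filterMap_cons, hC2]
                  · simp [List.filterMap_cons, hC3]
                  · simp only [alignScore, List.map_cons, List.sum_cons] at hsc ⊢
                    linarith
                  · simp only [List.length_cons, List.length_nil] at hl1 ⊢; omega
                  · simp only [List.length_cons, List.length_nil] at hl2 ⊢; omega
                · have hmin : γ (some a) none + γ none (some c) ≤
                      γ (some a) (some b') + γ (some b') (some c) := by
                    have := h3 a b' c; rwa [min_eq_right hle] at this
                  refine ⟨(some a, none) :: (none, some c) :: C', k', ⟨?_, ?_, ?_⟩, ?_, ?_, ?_⟩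
                  · intro x hx
                    rcases List.mem_cons.mp hx with hx | hx
                    · simp [hx]
                    rcases List.mem_cons.mp hx with hx | hx
                    · simp [hx]
                    · exact hC1 x hx
                  · simp [List.filterMap_cons, hC2]
                  · simp [List.filterMap_cons, hC3]
                  · simp only [alignScore, List.map_cons, List.sum_cons] at hsc ⊢
                    linarith
                  · simp only [List.length_cons, List.length_nil] at hl1 ⊢; omega
                  · simp only [List.length_cons, List.length_nil] at hl2 ⊢; omega


theorem stmt5 {σ : Type*} [Fintype σ] (γ : Scoring σ) (Q : ℝ)
    (h1 : ∀ a b : σ, γ (some a) none ≤ γ (some a) (some b) + γ (some b) none)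
    (h2 : ∀ a b : σ, γ none (some a) ≤ γ none (some b) + γ (some b) (some a))
    (h3 : ∀ a b c : σ,
      min (γ (some a) (some c)) (γ (some a) none + γ none (some c)) ≤
        γ (some a) (some b) + γ (some b) (some c))
    (h4 : ∀ b : σ, Q ≤ γ (some b) none + γ none (some b))
    (s t u : List σ) (A B : List (Option σ × Option σ))
    (hA : IsAlignment A s t) (hB : IsAlignment B t u) :
    ∃ (C : List (Option σ × Option σ)) (k : ℕ), IsAlignment C s u ∧
      alignScore γ C + (k : ℝ) * Q ≤ alignScore γ A + alignScore γ B ∧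
      A.length ≤ C.length + k ∧ B.length ≤ C.length + k := by
  exact key γ Q h1 h2 h3 h4 (A.length + B.length) A B s t u le_rfl hA hB
end

section
/- For every scoring matrix γ, the weighted edit distance dist_γ is a premetric on Σ* if and only if the normalized edit distance ndist_γ is a premetric on Σ*. -/
open List

section Aux

variable {σ : Type*}

lemma align_length_le {A : List (Option σ × Option σ)} {s t : List σ}
    (h : IsAlignment A s t) : A.length ≤ s.length + t.length := by
  obtain ⟨hc, hs, ht⟩ := h
  subst hs; subst ht
  induction A with
  | nil => simp
  | cons c l ih =>
    have hne := hc c (by simp)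
    have ih' := ih (fun x hx => hc x (by simp [hx]))
    obtain ⟨x, y⟩ := c
    match x, y with
    | none, none => exact absurd rfl hne
    | some a, none => simp [List.filterMap_cons]; omega
    | none, some b => simp [List.filterMap_cons]; omega
    | some a, some b => simp [List.filterMap_cons]; omega

lemma align_set_finite [Fintype σ] (g : List (Option σ × Option σ) → ℝ) (s t : List σ) :
    {x | ∃ A, IsAlignment A s t ∧ g A = x}.Finite := by
  have h1 : {x | ∃ A, IsAlignment A s t ∧ g A = x}
      ⊆ g '' {A : List (Option σ × Option σ) | A.length ≤ s.length + t.length} := by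
    rintro x ⟨A, hA, rfl⟩
    exact ⟨A, align_length_le hA, rfl⟩
  exact Set.Finite.subset ((List.finite_length_le _ _).image g) h1

lemma align_set_nonempty (g : List (Option σ × Option σ) → ℝ) (s t : List σ) :
    {x | ∃ A, IsAlignment A s t ∧ g A = x}.Nonempty := by
  refine ⟨g (s.map (fun a => (some a, none)) ++ t.map (fun b => (none, some b))),
    s.map (fun a => (some a, none)) ++ t.map (fun b => (none, some b)), ⟨?_, ?_, ?_⟩, rfl⟩
  · intro c hc
    simp only [List.mem_append, List.mem_map] at hc
    rcases hc with ⟨a, _, rfl⟩ | ⟨b, _, rfl⟩ <;> simp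
  · simp [List.filterMap_append, List.filterMap_map, Function.comp_def]
  · simp [List.filterMap_append, List.filterMap_map, Function.comp_def]

end Aux

theorem stmt8 {σ : Type*} [Fintype σ] (γ : Scoring σ) :
    IsPremetric (editDist γ) ↔ IsPremetric (ndist γ) := by
  constructor
  · rintro ⟨h1, h2⟩
    have key : ∀ s t : List σ, ∀ A : List (Option σ × Option σ),
        IsAlignment A s t → editDist γ s t ≤ alignScore γ A := by
      intro s t A hA
      exact csInf_le ((align_set_finite _ s t).bddBelow) ⟨A, hA, rfl⟩
    have nd_nonneg : ∀ s t, 0 ≤ ndist γ s t := by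
      intro s t
      obtain ⟨A, hA, hEq⟩ := (align_set_nonempty
        (fun A => alignScore γ A / (A.length : ℝ)) s t).csInf_mem
        (align_set_finite _ s t)
      rw [ndist, ← hEq]
      have : (0:ℝ) ≤ alignScore γ A := le_trans (h2 s t) (key s t A hA)
      positivity
    refine ⟨?_, nd_nonneg⟩
    intro s
    refine le_antisymm ?_ (nd_nonneg s s)
    obtain ⟨A, hA, hEq⟩ := (align_set_nonempty (alignScore γ) s s).csInf_mem
      (align_set_finite _ s s)
    have hz : alignScore γ A = 0 := by
      rw [hEq]; exact h1 s
    calc ndist γ s s ≤ alignScore γ A / (A.length : ℝ) :=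
          csInf_le ((align_set_finite _ s s).bddBelow) ⟨A, hA, rfl⟩
      _ = 0 := by rw [hz]; simp
  · rintro ⟨h1, h2⟩
    have key : ∀ s t : List σ, ∀ A : List (Option σ × Option σ),
        IsAlignment A s t → (0:ℝ) ≤ alignScore γ A := by
      intro s t A hA
      have hle : ndist γ s t ≤ alignScore γ A / (A.length : ℝ) :=
        csInf_le ((align_set_finite _ s t).bddBelow) ⟨A, hA, rfl⟩
      have h0 : (0:ℝ) ≤ alignScore γ A / (A.length : ℝ) := le_trans (h2 s t) hle
      rcases Nat.eq_zero_or_pos A.length with hlen | hlen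
      · have : A = [] := List.length_eq_zero_iff.mp hlen
        simp [this, alignScore]
      · have hpos : (0:ℝ) < (A.length : ℝ) := by exact_mod_cast hlen
        exact (div_nonneg_iff.mp h0).resolve_right (fun ⟨_, hb⟩ => absurd hb (not_le.mpr hpos)) |>.1
    have ed_nonneg : ∀ s t, 0 ≤ editDist γ s t := by
      intro s t
      obtain ⟨A, hA, hEq⟩ := (align_set_nonempty (alignScore γ) s t).csInf_mem
        (align_set_finite _ s t)
      rw [editDist, ← hEq]
      exact key s t A hA
    refine ⟨?_, ed_nonneg⟩
    intro s
    refine le_antisymm ?_ (ed_nonneg s s)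
    obtain ⟨A, hA, hEq⟩ := (align_set_nonempty
      (fun A => alignScore γ A / (A.length : ℝ)) s s).csInf_mem (align_set_finite _ s s)
    have hEq0 : alignScore γ A / (A.length : ℝ) = 0 := hEq.trans (h1 s)
    have hz : alignScore γ A = 0 := by
      rcases div_eq_zero_iff.mp hEq0 with h | h
      · exact h
      · have : A = [] := List.length_eq_zero_iff.mp (by exact_mod_cast h)
        simp [this, alignScore]
    calc editDist γ s s ≤ alignScore γ A :=
          csInf_le ((align_set_finite _ s s).bddBelow) ⟨A, hA, rfl⟩
      _ = 0 := hz
end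

section
/- Suppose the normalized edit distance ndist_γ is a premetric. Then ndist_γ(s,t) > 0 for all s ≠ t in Σ* if and only if γ(a,‐) > 0, γ(‐,a) > 0 for all a ∈ Σ, and γ(a,b) > 0 for all distinct a,b ∈ Σ. -/
open List

section Aux
variable {σ : Type*}

lemma exists_alignment (s t : List σ) :
    IsAlignment ((s.map (fun a => ((some a : Option σ), (none : Option σ)))) ++
      (t.map (fun b => ((none : Option σ), (some b : Option σ))))) s t := by
  refine ⟨?_, ?_, ?_⟩
  · intro c hc
    rcases List.mem_append.1 hc with h | h <;> rcases List.mem_map.1 h with ⟨x, _, rfl⟩ <;> simp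
  · rw [List.filterMap_append]
    have h1 : (s.map (fun a => ((some a : Option σ), (none : Option σ)))).filterMap Prod.fst = s := by
      induction s with
      | nil => rfl
      | cons a s ih => simp [List.filterMap_cons, ih]
    have h2 : (t.map (fun b => ((none : Option σ), (some b : Option σ)))).filterMap Prod.fst = [] := by
      induction t with
      | nil => rfl
      | cons b t ih => simp [List.filterMap_cons, ih]
    rw [h1, h2, List.append_nil]
  · rw [List.filterMap_append]
    have h1 : (s.map (fun a => ((some a : Option σ), (none : Option σ)))).filterMap Prod.snd = [] := by
      induction s with
      | nil => rfl
      | cons a s ih => simp [List.filterMap_cons, ih]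
    have h2 : (t.map (fun b => ((none : Option σ), (some b : Option σ)))).filterMap Prod.snd = t := by
      induction t with
      | nil => rfl
      | cons b t ih => simp [List.filterMap_cons, ih]
    rw [h1, h2, List.nil_append]

lemma eq_of_all_match (A : List (Option σ × Option σ))
    (h : ∀ c ∈ A, c.1 = c.2) : A.filterMap Prod.fst = A.filterMap Prod.snd := by
  induction A with
  | nil => rfl
  | cons c A ih =>
    rw [List.filterMap_cons, List.filterMap_cons, h c (by simp),
      ih (fun d hd => h d (by simp [hd]))]

lemma length_le_aux (A : List (Option σ × Option σ))
    (h : ∀ c ∈ A, c ≠ ((none : Option σ), (none : Option σ))) :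
    A.length ≤ (A.filterMap Prod.fst).length + (A.filterMap Prod.snd).length := by
  induction A with
  | nil => simp
  | cons c A ih =>
    have hc := h c (by simp)
    have ih' := ih (fun d hd => h d (by simp [hd]))
    rcases c with ⟨x, y⟩
    rw [List.filterMap_cons, List.filterMap_cons]
    rcases x with _ | a <;> rcases y with _ | b
    · exact absurd rfl hc
    · simp only [Option.some.injEq]; simp; omega
    · simp; omega
    · simp; omega

lemma sum_ge_delta (f : Option σ × Option σ → ℝ) (δ : ℝ)
    (A : List (Option σ × Option σ))
    (h0 : ∀ c ∈ A, 0 ≤ f c) (hδ : ∀ c ∈ A, c.1 ≠ c.2 → δ ≤ f c)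
    (hex : ∃ c ∈ A, c.1 ≠ c.2) : δ ≤ (A.map f).sum := by
  induction A with
  | nil => simp at hex
  | cons c A ih =>
    rw [List.map_cons, List.sum_cons]
    have hsum0 : 0 ≤ (A.map f).sum := by
      apply List.sum_nonneg
      intro x hx
      rcases List.mem_map.1 hx with ⟨y, hy, rfl⟩
      exact h0 y (by simp [hy])
    rcases hex with ⟨d, hd, hdne⟩
    rcases List.mem_cons.1 hd with rfl | hd'
    · have h1 := hδ d (by simp) hdne
      linarith
    · have h1 := ih (fun e he => h0 e (by simp [he]))
        (fun e he hne => hδ e (by simp [he]) hne) ⟨d, hd', hdne⟩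
      have h2 := h0 c (by simp)
      linarith

lemma mul_len_le_sum (f : Option σ × Option σ → ℝ) (m : ℝ)
    (A : List (Option σ × Option σ)) (h : ∀ c ∈ A, m ≤ f c) :
    m * A.length ≤ (A.map f).sum := by
  induction A with
  | nil => simp
  | cons c A ih =>
    have h1 := ih (fun d hd => h d (by simp [hd]))
    have h2 := h c (by simp)
    simp only [List.map_cons, List.sum_cons, List.length_cons]
    push_cast
    nlinarith [h1, h2]

end Aux

section Main
variable {σ : Type*} [Fintype σ]

lemma ndist_set_bddBelow (γ : Scoring σ) (s t : List σ) :
    BddBelow {x | ∃ A, IsAlignment A s t ∧ alignScore γ A / (A.length : ℝ) = x} := by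
  classical
  obtain ⟨m, hm⟩ : ∃ m : ℝ, ∀ p : Option σ × Option σ, m ≤ γ p.1 p.2 := by
    refine ⟨(Finset.univ : Finset (Option σ × Option σ)).inf' ⟨(none, none), Finset.mem_univ _⟩
      (fun p => γ p.1 p.2), fun p => Finset.inf'_le _ (Finset.mem_univ p)⟩
  refine ⟨min 0 m, ?_⟩
  rintro x ⟨A, hA, rfl⟩
  rcases eq_or_ne A [] with rfl | hne
  · simp
  · have hlen : 0 < (A.length : ℝ) := by
      have := List.length_pos_iff.2 hne
      exact_mod_cast this
    have hsum : m * A.length ≤ alignScore γ A :=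
      mul_len_le_sum _ m A (fun c _ => hm (c.1, c.2))
    have : m ≤ alignScore γ A / A.length := by
      rw [le_div_iff₀ hlen]
      linarith
    exact le_trans (min_le_right _ _) this

lemma single_mem (γ : Scoring σ) (x y : Option σ) (hxy : ¬(x = none ∧ y = none)) :
    γ x y ∈ {r | ∃ A, IsAlignment A (x.toList) (y.toList) ∧
      alignScore γ A / (A.length : ℝ) = r} := by
  refine ⟨[(x, y)], ⟨?_, ?_, ?_⟩, ?_⟩
  · intro c hc
    simp only [List.mem_singleton] at hc
    subst hc
    intro h
    exact hxy ⟨congrArg Prod.fst h, congrArg Prod.snd h⟩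
  · rcases x with _ | a <;> simp [List.filterMap_cons]
  · rcases y with _ | b <;> simp [List.filterMap_cons]
  · simp [alignScore]

end Main
theorem stmt9 {σ : Type*} [Fintype σ] (γ : Scoring σ)
    (hpre : IsPremetric (ndist γ)) :
    (∀ s t : List σ, s ≠ t → 0 < ndist γ s t) ↔
      ((∀ a : σ, 0 < γ (some a) none ∧ 0 < γ none (some a)) ∧
       (∀ a b : σ, a ≠ b → 0 < γ (some a) (some b))) := by
  classical
  constructor
  · intro h
    have key : ∀ (x y : Option σ), ¬(x = none ∧ y = none) → x.toList ≠ y.toList →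
        0 < γ x y := by
      intro x y hxy hne
      have hpos := h x.toList y.toList hne
      have hbdd := ndist_set_bddBelow γ x.toList y.toList
      have hle : ndist γ x.toList y.toList ≤ γ x y :=
        csInf_le hbdd (single_mem γ x y hxy)
      linarith
    refine ⟨fun a => ⟨?_, ?_⟩, fun a b hab => ?_⟩
    · exact key (some a) none (by simp) (by simp)
    · exact key none (some a) (by simp) (by simp)
    · exact key (some a) (some b) (by simp) (by simp [hab])
  · rintro ⟨h1, h2⟩ s t hst
    have hσ : Nonempty σ := by
      rcases s with _ | ⟨a, s⟩
      · rcases t with _ | ⟨b, t⟩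
        · exact absurd rfl hst
        · exact ⟨b⟩
      · exact ⟨a⟩
    obtain ⟨a0⟩ := hσ
    have hmatch : ∀ a : σ, 0 ≤ γ (some a) (some a) := by
      intro a
      have h0 : ndist γ [a] [a] = 0 := hpre.1 [a]
      have hbdd := ndist_set_bddBelow γ [a] [a]
      have hle : ndist γ [a] [a] ≤ γ (some a) (some a) :=
        csInf_le hbdd (single_mem γ (some a) (some a) (by simp))
      linarith
    set P := (Finset.univ : Finset (Option σ × Option σ)).filter (fun p => p.1 ≠ p.2) with hP
    have hPne : P.Nonempty := ⟨(some a0, none), by simp [hP]⟩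
    set δ := P.inf' hPne (fun p => γ p.1 p.2) with hδdef
    have hδpos : 0 < δ := by
      rw [hδdef, Finset.lt_inf'_iff]
      rintro ⟨x, y⟩ hp
      simp only [hP, Finset.mem_filter, Finset.mem_univ, true_and] at hp
      rcases x with _ | a <;> rcases y with _ | b
      · exact absurd rfl hp
      · exact (h1 b).2
      · exact (h1 a).1
      · exact h2 a b (fun hh => hp (by rw [hh]))
    have hδle : ∀ x y : Option σ, x ≠ y → δ ≤ γ x y := by
      intro x y hxy
      have hm : (x, y) ∈ P := by
        rw [hP]
        exact Finset.mem_filter.2 ⟨Finset.mem_univ _, hxy⟩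
      exact Finset.inf'_le _ hm
    have hNpos : 0 < ((s.length + t.length : ℕ) : ℝ) := by
      have : s.length + t.length ≠ 0 := by
        intro hc
        apply hst
        rw [List.eq_nil_of_length_eq_zero (by omega : s.length = 0),
          List.eq_nil_of_length_eq_zero (by omega : t.length = 0)]
      exact_mod_cast Nat.pos_of_ne_zero this
    have hne : {x | ∃ A, IsAlignment A s t ∧ alignScore γ A / (A.length : ℝ) = x}.Nonempty :=
      ⟨_, _, exists_alignment s t, rfl⟩
    have hlow : ∀ x ∈ {x | ∃ A, IsAlignment A s t ∧ alignScore γ A / (A.length : ℝ) = x},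
        δ / ((s.length + t.length : ℕ) : ℝ) ≤ x := by
      rintro x ⟨A, ⟨hA1, hA2, hA3⟩, rfl⟩
      have hAne : A ≠ [] := by
        rintro rfl
        simp only [List.filterMap_nil] at hA2 hA3
        exact hst (hA2 ▸ hA3 ▸ rfl)
      have hex : ∃ c ∈ A, c.1 ≠ c.2 := by
        by_contra hc
        push_neg at hc
        exact hst (by rw [← hA2, ← hA3, eq_of_all_match A hc])
      have hs : δ ≤ alignScore γ A := by
        apply sum_ge_delta _ _ _ ?_ ?_ hex
        · intro c hc
          by_cases hcc : c.1 = c.2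
          · obtain ⟨x, y⟩ := c
            obtain rfl : x = y := hcc
            rcases x with _ | a
            · exact absurd rfl (hA1 _ hc)
            · exact hmatch a
          · exact le_of_lt (lt_of_lt_of_le hδpos (hδle _ _ hcc))
        · intro c _ hcc
          exact hδle _ _ hcc
      have hlenle : (A.length : ℝ) ≤ ((s.length + t.length : ℕ) : ℝ) := by
        have := length_le_aux A hA1
        rw [hA2, hA3] at this
        exact_mod_cast this
      have hlenpos : 0 < (A.length : ℝ) := by
        exact_mod_cast List.length_pos_iff.2 hAne
      rw [div_le_div_iff₀ hNpos hlenpos]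
      nlinarith [hs, hδpos, hlenle, hlenpos]
    have hInf : δ / ((s.length + t.length : ℕ) : ℝ) ≤ ndist γ s t :=
      le_csInf hne hlow
    have := div_pos hδpos hNpos
    linarith
end

section
/- Let ndist_γ be a premetric, and let a,b ∈ Σ and s,t ∈ Σ*. If the pair [a,b] (two alphabet symbols, no space) is aligned in some column of an N-optimal alignment of s,t of maximum length, then γ(a,b) < γ(a,‐) + γ(‐,b). -/
open List

lemma list_len_mul_le_sum (m : ℝ) : ∀ l : List ℝ, (∀ x ∈ l, m ≤ x) →
    (l.length : ℝ) * m ≤ l.sum := by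
  intro l
  induction l with
  | nil => simp
  | cons x xs ih =>
    intro h
    have h1 := h x (by simp)
    have h2 := ih (fun y hy => h y (by simp [hy]))
    simp only [List.length_cons, List.sum_cons]
    push_cast
    linarith

theorem stmt11 {σ : Type*} [Fintype σ] (γ : Scoring σ)
    (hpre : IsPremetric (ndist γ))
    (a b : σ) (s t : List σ) (A : List (Option σ × Option σ))
    (hA : IsAlignment A s t)
    (hopt : alignScore γ A / (A.length : ℝ) = ndist γ s t)
    (hmax : ∀ B : List (Option σ × Option σ), IsAlignment B s t →
      alignScore γ B / (B.length : ℝ) = ndist γ s t → B.length ≤ A.length)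
    (hmem : ((some a : Option σ), (some b : Option σ)) ∈ A) :
    γ (some a) (some b) < γ (some a) none + γ none (some b) := by
  classical
  by_contra hcon
  push_neg at hcon
  obtain ⟨A₁, A₂, rfl⟩ := List.append_of_mem hmem
  set B : List (Option σ × Option σ) :=
    A₁ ++ (some a, none) :: (none, some b) :: A₂ with hBdef
  obtain ⟨h1, h2, h3⟩ := hA
  have hBA : IsAlignment B s t := by
    refine ⟨?_, ?_, ?_⟩
    · intro x hx
      simp only [hBdef, List.mem_append, List.mem_cons] at hx
      rcases hx with h | h | h | h
      · exact h1 x (by simp [h])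
      · simp [h]
      · simp [h]
      · exact h1 x (by simp [h])
    · simpa [hBdef, List.filterMap_append, List.filterMap_cons] using h2
    · simpa [hBdef, List.filterMap_append, List.filterMap_cons] using h3
  -- lengths
  set L : ℕ := A₁.length + 1 + A₂.length with hLdef
  have hlenA : (A₁ ++ (some a, some b) :: A₂).length = L := by
    simp [hLdef]; omega
  have hlenB : B.length = L + 1 := by
    simp [hBdef, hLdef]; omega
  have hLpos : (0:ℝ) < (L:ℝ) := by positivity
  -- scores
  have hscoreA : alignScore γ (A₁ ++ (some a, some b) :: A₂)
      = alignScore γ A₁ + γ (some a) (some b) + alignScore γ A₂ := by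
    simp [alignScore]; ring
  have hscoreB : alignScore γ B
      = alignScore γ A₁ + (γ (some a) none + γ none (some b)) + alignScore γ A₂ := by
    simp [alignScore, hBdef]; ring
  set n : ℝ := ndist γ s t with hndef
  have hn0 : 0 ≤ n := hpre.2 s t
  have hSA : alignScore γ (A₁ ++ (some a, some b) :: A₂) = n * L := by
    rw [hlenA] at hopt
    field_simp at hopt
    linarith [hopt]
  -- the set is bounded below
  have hne : Nonempty (Option σ × Option σ) := ⟨(some a, some b)⟩
  set m0 : ℝ := Finset.univ.inf' Finset.univ_nonempty
    (fun p : Option σ × Option σ => γ p.1 p.2) with hm0def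
  set m : ℝ := min m0 0 with hmdef
  have hbdd : BddBelow {x | ∃ C, IsAlignment C s t ∧
      alignScore γ C / (C.length : ℝ) = x} := by
    refine ⟨m, ?_⟩
    rintro x ⟨C, hC, rfl⟩
    rcases Nat.eq_zero_or_pos C.length with h0 | hpos
    · simp [h0, hmdef]
    · have hC0 : (0:ℝ) < (C.length : ℝ) := by exact_mod_cast hpos
      rw [le_div_iff₀ hC0]
      have hsum : ((C.map fun c => γ c.1 c.2).length : ℝ) * m0
          ≤ (C.map fun c => γ c.1 c.2).sum := by
        apply list_len_mul_le_sum
        intro y hy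
        simp only [List.mem_map] at hy
        obtain ⟨c, _, rfl⟩ := hy
        exact Finset.inf'_le _ (Finset.mem_univ c)
      simp only [List.length_map] at hsum
      have hmm0 : m ≤ m0 := min_le_left _ _
      have : m * (C.length : ℝ) ≤ m0 * (C.length : ℝ) := by nlinarith
      calc m * (C.length : ℝ) ≤ m0 * (C.length : ℝ) := this
        _ ≤ alignScore γ C := by rw [alignScore]; linarith
  -- B is in the set
  have hmemB : alignScore γ B / (B.length : ℝ) ∈ {x | ∃ C, IsAlignment C s t ∧
      alignScore γ C / (C.length : ℝ) = x} := ⟨B, hBA, rfl⟩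
  have hle1 : n ≤ alignScore γ B / (B.length : ℝ) := csInf_le hbdd hmemB
  have hL1pos : (0:ℝ) < ((L:ℝ) + 1) := by positivity
  have hle2 : alignScore γ B / (B.length : ℝ) ≤ n := by
    rw [hlenB]
    push_cast
    rw [div_le_iff₀ hL1pos]
    have : alignScore γ B ≤ n * L := by
      rw [hscoreB]
      rw [hscoreA] at hSA
      linarith
    nlinarith
  have heq : alignScore γ B / (B.length : ℝ) = n := le_antisymm hle2 hle1
  have := hmax B hBA heq
  rw [hlenB, hlenA] at this
  omega
end

section
/- Let ndist_γ be a premetric. If ndist_γ satisfies the triangle inequality on Σ*, then for all a,b ∈ Σ: max{γ(a,‐), γ(‐,a)} ≤ γ(b,‐) + γ(‐,b). -/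
open List

/-! Aligning `a` with `bⁿ` by one deletion and `n` insertions
has normalized score `(γ(a,‐) + n γ(‐,b)) / (n + 1)`, and `bⁿ` against the empty word has
normalized distance `γ(b,‐)`. The triangle inequality through `bⁿ` therefore gives
`γ(a,‐) ≤ γ(b,‐) + γ(‐,b) + γ(b,‐) / n`, and we let `n → ∞`. Transposing `γ` swaps the roles
of deletions and insertions, which gives the bound for `γ(‐,a)`. -/

section Alignment

variable {σ : Type*}

theorem IsAlignment.map_swap {A : List (Option σ × Option σ)} {s t : List σ}
    (h : IsAlignment A s t) : IsAlignment (A.map Prod.swap) t s := by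
  obtain ⟨hcol, hs, ht⟩ := h
  refine ⟨?_, ?_, ?_⟩
  · rintro _ hc
    obtain ⟨⟨x, y⟩, hxy, rfl⟩ := List.mem_map.mp hc
    simpa [and_comm] using hcol _ hxy
  · simpa [List.filterMap_map] using ht
  · simpa [List.filterMap_map] using hs

theorem isAlignment_map_nil_right (s : List σ) :
    IsAlignment (s.map fun x => ((some x : Option σ), (none : Option σ))) s [] := by
  refine ⟨?_, ?_, ?_⟩ <;> simp [List.filterMap_map]

theorem IsAlignment.eq_map_of_nil_right {A : List (Option σ × Option σ)} {s : List σ}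
    (h : IsAlignment A s []) : A = s.map fun x => (some x, none) := by
  obtain ⟨hcol, rfl, hnil⟩ := h
  rw [List.filterMap_eq_nil_iff] at hnil
  induction A with
  | nil => rfl
  | cons c A ih =>
    obtain ⟨c₁, c₂⟩ := c
    obtain rfl : c₂ = none := hnil _ List.mem_cons_self
    obtain ⟨x, rfl⟩ : ∃ x, c₁ = some x :=
      Option.ne_none_iff_exists'.mp fun h => hcol _ List.mem_cons_self (by rw [h])
    rw [List.filterMap_cons_some (f := Prod.fst) rfl, List.map_cons]
    exact congrArg _ (ih (fun c hc => hcol c (List.mem_cons_of_mem _ hc))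
      (fun c hc => hnil c (List.mem_cons_of_mem _ hc)))

theorem isAlignment_cons_replicate (a b : σ) (n : ℕ) :
    IsAlignment (((some a : Option σ), (none : Option σ)) ::
      List.replicate n ((none : Option σ), (some b : Option σ))) [a] (List.replicate n b) := by
  refine ⟨?_, ?_, ?_⟩
  · simp only [List.mem_cons, List.mem_replicate]
    rintro c (rfl | ⟨-, rfl⟩) <;> simp
  · simp
  · simp

theorem alignScore_map_swap (γ : Scoring σ) (A : List (Option σ × Option σ)) :
    alignScore γ (A.map Prod.swap) = alignScore (flip γ) A := by
  simp [alignScore, Function.comp_def, flip]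

end Alignment

section NormalizedDistance

variable {σ : Type*}

theorem ndist_flip (γ : Scoring σ) (s t : List σ) : ndist (flip γ) s t = ndist γ t s := by
  unfold ndist
  congr 1
  ext x
  constructor
  · rintro ⟨A, hA, rfl⟩
    exact ⟨A.map Prod.swap, hA.map_swap, by rw [alignScore_map_swap, List.length_map]⟩
  · rintro ⟨A, hA, rfl⟩
    exact ⟨A.map Prod.swap, hA.map_swap, by rw [alignScore_map_swap, List.length_map]; rfl⟩

theorem bddBelow_ndist_set [Finite σ] (γ : Scoring σ) (s t : List σ) :
    BddBelow {x | ∃ A, IsAlignment A s t ∧ alignScore γ A / (A.length : ℝ) = x} := by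
  obtain ⟨m, hm⟩ := (Set.finite_range (Function.uncurry γ)).bddBelow
  refine ⟨min m 0, ?_⟩
  rintro _ ⟨A, -, rfl⟩
  rcases A with _ | ⟨c, B⟩
  · simp
  have hlen : (0 : ℝ) < (c :: B).length := by simp; positivity
  rw [le_div_iff₀ hlen]
  calc min m 0 * (c :: B).length ≤ m * (c :: B).length := by gcongr; exact min_le_left _ _
    _ ≤ alignScore γ (c :: B) := by
      rw [mul_comm, ← nsmul_eq_mul, alignScore, ← List.length_map (f := fun c => γ c.1 c.2)]
      exact List.card_nsmul_le_sum _ _ fun _ hx => by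
        obtain ⟨c, -, rfl⟩ := List.mem_map.mp hx
        exact hm ⟨(c.1, c.2), rfl⟩

theorem ndist_le_of_isAlignment [Finite σ] (γ : Scoring σ) {s t : List σ}
    {A : List (Option σ × Option σ)} (hA : IsAlignment A s t) :
    ndist γ s t ≤ alignScore γ A / A.length :=
  csInf_le (bddBelow_ndist_set γ s t) ⟨A, hA, rfl⟩

theorem ndist_nil_right (γ : Scoring σ) (s : List σ) :
    ndist γ s [] = (s.map fun x => γ (some x) none).sum / s.length := by
  have hset : {x | ∃ A, IsAlignment A s [] ∧ alignScore γ A / (A.length : ℝ) = x}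
      = {(s.map fun x => γ (some x) none).sum / s.length} := by
    ext x
    constructor
    · rintro ⟨A, hA, rfl⟩
      simp [hA.eq_map_of_nil_right, alignScore, Function.comp_def]
    · rintro rfl
      exact ⟨_, isAlignment_map_nil_right s, by simp [alignScore, Function.comp_def]⟩
  rw [ndist, hset, csInf_singleton]

theorem ndist_replicate_nil (γ : Scoring σ) (b : σ) {n : ℕ} (hn : n ≠ 0) :
    ndist γ (List.replicate n b) [] = γ (some b) none := by
  rw [ndist_nil_right, List.map_replicate, List.sum_replicate, List.length_replicate,
    nsmul_eq_mul, mul_div_cancel_left₀ _ (Nat.cast_ne_zero.mpr hn)]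

theorem ndist_singleton_replicate_le [Finite σ] (γ : Scoring σ) (a b : σ) (n : ℕ) :
    ndist γ [a] (List.replicate n b) ≤ (γ (some a) none + n * γ none (some b)) / (n + 1) := by
  convert ndist_le_of_isAlignment γ (isAlignment_cons_replicate a b n) using 2
  · simp [alignScore, List.map_replicate, List.sum_replicate]
  · simp

end NormalizedDistance

theorem le_of_forall_nat_le_add_div {x c d : ℝ} (h : ∀ n : ℕ, 0 < n → x ≤ c + d / n) :
    x ≤ c := by
  have hlim : Filter.Tendsto (fun n : ℕ => c + d / n) Filter.atTop (nhds c) := by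
    simpa using tendsto_const_nhds.add (tendsto_const_div_atTop_nhds_zero_nat d)
  exact ge_of_tendsto hlim (Filter.eventually_atTop.mpr ⟨1, fun n hn => h n hn⟩)

theorem deletion_le_of_ndist_triangle {σ : Type*} [Finite σ] (γ : Scoring σ)
    (htri : ∀ s t u : List σ, ndist γ s t ≤ ndist γ s u + ndist γ u t) (a b : σ) :
    γ (some a) none ≤ γ (some b) none + γ none (some b) := by
  set X := γ (some a) none
  set P := γ (some b) none
  set Q := γ none (some b)
  refine le_of_forall_nat_le_add_div (d := P) fun n hn => ?_
  have hn₀ : (0 : ℝ) < n := Nat.cast_pos.mpr hn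
  have hthrough : X ≤ (X + n * Q) / (n + 1) + P :=
    calc X = ndist γ [a] [] := by simpa using (ndist_replicate_nil γ a one_ne_zero).symm
      _ ≤ ndist γ [a] (List.replicate n b) + ndist γ (List.replicate n b) [] := htri _ _ _
      _ ≤ (X + n * Q) / (n + 1) + P := by
        rw [ndist_replicate_nil γ b hn.ne']
        gcongr
        exact ndist_singleton_replicate_le γ a b n
  rw [div_add' _ _ _ (by positivity), le_div_iff₀ (by positivity)] at hthrough
  have hscaled : (X - P - Q) * n ≤ P := by nlinarith
  linarith [(le_div_iff₀ hn₀).mpr hscaled]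

theorem stmt12_general {σ : Type*} [Fintype σ] (γ : Scoring σ)
    (htri : ∀ s t u : List σ, ndist γ s t ≤ ndist γ s u + ndist γ u t) :
    ∀ a b : σ,
      max (γ (some a) none) (γ none (some a)) ≤ γ (some b) none + γ none (some b) := by
  intro a b
  have htri_flip : ∀ s t u : List σ,
      ndist (flip γ) s t ≤ ndist (flip γ) s u + ndist (flip γ) u t := by
    intro s t u
    simpa only [ndist_flip, add_comm] using htri t s u
  refine max_le (deletion_le_of_ndist_triangle γ htri a b) ?_
  simpa only [flip, add_comm] using deletion_le_of_ndist_triangle (flip γ) htri_flip a b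

theorem stmt12 {σ : Type*} [Fintype σ] (γ : Scoring σ)
    (hpre : IsPremetric (ndist γ))
    (htri : ∀ s t u : List σ, ndist γ s t ≤ ndist γ s u + ndist γ u t) :
    ∀ a b : σ,
      max (γ (some a) none) (γ none (some a)) ≤ γ (some b) none + γ none (some b) :=
  stmt12_general γ htri
end

section
/- If a scoring matrix γ satisfies, for all a,b,c ∈ Σ: γ(a,‐) = γ(‐,a) > 0; γ(a,b) > 0 for a ≠ b and γ(a,a) = 0; γ(a,b) = γ(b,a) whenever γ(a,b) < γ(a,‐)+γ(‐,b); γ(a,‐) ≤ γ(a,b)+γ(b,‐); and min{γ(a,c), γ(a,‐)+γ(‐,c)} ≤ γ(a,b)+γ(b,c); then the shortest-walk distance in the weighted digraph D(γ) is symmetric: d_γ(x,y) = d_γ(y,x) for all x,y ∈ Σ₋. -/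
open List

section Aux

variable {σ : Type*} (γ : Scoring σ)

lemma ww_single (a : Option σ) : walkWeight γ [a] = 0 := by simp [walkWeight]

lemma ww_cons_cons (a b : Option σ) (l : List (Option σ)) :
    walkWeight γ (a :: b :: l) = γ a b + walkWeight γ (b :: l) := by
  simp [walkWeight]

lemma ww_concat (v : Option σ) :
    ∀ (W : List (Option σ)) (u : Option σ), W.getLast? = some u →
      walkWeight γ (W ++ [v]) = walkWeight γ W + γ u v
  | [], u, h => by simp at h
  | [w], u, h => by
      simp only [List.getLast?_singleton, Option.some.injEq] at h
      subst h
      simp [ww_cons_cons, ww_single]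
  | a :: b :: l, u, h => by
      have ih := ww_concat v (b :: l) u (by simpa using h)
      simp only [List.cons_append] at *
      rw [ww_cons_cons, ww_cons_cons, ih]
      ring

lemma ww_nonneg (harc : ∀ a b : Option σ, ¬(a = none ∧ b = none) → 0 ≤ γ a b) :
    ∀ W : List (Option σ), IsWalkSeq W → 0 ≤ walkWeight γ W
  | [], _ => le_of_eq rfl
  | [a], _ => le_of_eq (ww_single γ a).symm
  | a :: b :: l, h => by
      rw [ww_cons_cons]
      have hab := (List.isChain_cons_cons.mp h).1
      have ht := (List.isChain_cons_cons.mp h).2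
      exact add_nonneg (harc a b hab) (ww_nonneg harc (b :: l) ht)

lemma head?_append_of {σ' : Type*} {W : List (Option σ')} {y : Option σ'} (h : W.head? = some y)
    (L : List (Option σ')) : (W ++ L).head? = some y := by
  cases W with
  | nil => simp at h
  | cons a t => simpa using h

lemma rev_walk
    (h1 : ∀ a : σ, γ (some a) none = γ none (some a) ∧ 0 < γ (some a) none)
    (h4 : ∀ a b : σ, γ (some a) (some b) < γ (some a) none + γ none (some b) →
      γ (some a) (some b) = γ (some b) (some a)) :
    ∀ W : List (Option σ), IsWalkSeq W → ∀ x y, W.head? = some x → W.getLast? = some y →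
      ∃ W', IsWalkSeq W' ∧ W'.head? = some y ∧ W'.getLast? = some x ∧
        walkWeight γ W' ≤ walkWeight γ W
  | [], _, x, y, hh, _ => by simp at hh
  | [a], _, x, y, hh, hl => by
      simp only [List.head?_cons, Option.some.injEq] at hh
      simp only [List.getLast?_singleton, Option.some.injEq] at hl
      exact ⟨[a], List.isChain_singleton _, by simp [hl], by simp [hh], le_refl _⟩
  | a :: b :: l, h, x, y, hh, hl => by
      simp only [List.head?_cons, Option.some.injEq] at hh
      subst hh
      have hab := (List.isChain_cons_cons.mp h).1
      have ht : IsWalkSeq (b :: l) := (List.isChain_cons_cons.mp h).2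
      obtain ⟨W', hW', hWh, hWl, hle⟩ :=
        rev_walk h1 h4 (b :: l) ht b y rfl (by simpa using hl)
      have sub1 : γ a b = γ b a →
          ∃ W'', IsWalkSeq W'' ∧ W''.head? = some y ∧ W''.getLast? = some a ∧
            walkWeight γ W'' ≤ walkWeight γ (a :: b :: l) := by
        intro hsym
        refine ⟨W' ++ [a], ?_, head?_append_of hWh _, by simp, ?_⟩
        · refine List.isChain_append.mpr ⟨hW', List.isChain_singleton _, ?_⟩
          intro u hu v hv
          rw [hWl] at hu
          simp only [Option.mem_def, Option.some.injEq] at hu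
          simp only [List.head?_cons, Option.mem_def, Option.some.injEq] at hv
          subst hu; subst hv
          rintro ⟨hb, ha⟩
          exact hab ⟨ha, hb⟩
        · rw [ww_concat γ a W' b hWl, ww_cons_cons, ← hsym]
          linarith
      match a, b with
      | none, none => exact absurd ⟨rfl, rfl⟩ hab
      | none, some b' => exact sub1 ((h1 b').1.symm)
      | some a', none => exact sub1 (h1 a').1
      | some a', some b' =>
        by_cases hcase : γ (some a') (some b') < γ (some a') none + γ none (some b')
        · exact sub1 (h4 a' b' hcase)
        · have hge := not_lt.mp hcase
          refine ⟨(W' ++ [none]) ++ [some a'], ?_,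
            head?_append_of (head?_append_of hWh _) _, by simp, ?_⟩
          · refine List.isChain_append.mpr ⟨?_, List.isChain_singleton _, ?_⟩
            · refine List.isChain_append.mpr ⟨hW', List.isChain_singleton _, ?_⟩
              intro u hu v hv
              rw [hWl] at hu
              simp only [Option.mem_def, Option.some.injEq] at hu
              simp only [List.head?_cons, Option.mem_def, Option.some.injEq] at hv
              subst hu; subst hv
              rintro ⟨hb, _⟩
              exact Option.some_ne_none _ hb
            · intro u hu v hv
              rw [Option.mem_def, List.getLast?_concat, Option.some.injEq] at hu
              simp only [List.head?_cons, Option.mem_def, Option.some.injEq] at hv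
              subst hu; subst hv
              rintro ⟨_, ha⟩
              exact Option.some_ne_none _ ha
          · rw [ww_concat γ (some a') (W' ++ [none]) none (by simp),
              ww_concat γ none W' (some b') hWl, ww_cons_cons]
            have e1 := (h1 b').1
            have e2 := (h1 a').1
            linarith

end Aux

theorem stmt15 {σ : Type*} [Fintype σ] (γ : Scoring σ)
    (h1 : ∀ a : σ, γ (some a) none = γ none (some a) ∧ 0 < γ (some a) none)
    (h2 : ∀ a b : σ, a ≠ b → 0 < γ (some a) (some b))
    (h3 : ∀ a : σ, γ (some a) (some a) = 0)
    (h4 : ∀ a b : σ, γ (some a) (some b) < γ (some a) none + γ none (some b) →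
      γ (some a) (some b) = γ (some b) (some a))
    (h5 : ∀ a b : σ, γ (some a) none ≤ γ (some a) (some b) + γ (some b) none)
    (h6 : ∀ a b c : σ,
      min (γ (some a) (some c)) (γ (some a) none + γ none (some c)) ≤
        γ (some a) (some b) + γ (some b) (some c)) :
    ∀ x y : Option σ, walkDist γ x y = walkDist γ y x := by
  classical
  have harc : ∀ a b : Option σ, ¬(a = none ∧ b = none) → 0 ≤ γ a b := by
    rintro (_ | a) (_ | b) h
    · exact absurd ⟨rfl, rfl⟩ h
    · rw [← (h1 b).1]; exact le_of_lt (h1 b).2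
    · exact le_of_lt (h1 a).2
    · by_cases hab : a = b
      · subst hab; exact le_of_eq (h3 a).symm
      · exact le_of_lt (h2 a b hab)
  set S : Option σ → Option σ → Set ℝ := fun x y =>
    {w | ∃ W : List (Option σ), IsWalkSeq W ∧ W.head? = some x ∧
      W.getLast? = some y ∧ walkWeight γ W = w} with hS
  have hne : ∀ x y : Option σ, (S x y).Nonempty := by
    intro x y
    by_cases hxy : x = y
    · subst hxy
      exact ⟨walkWeight γ [x], [x], List.isChain_singleton _, rfl, rfl, rfl⟩
    · refine ⟨walkWeight γ [x, y], [x, y], ?_, rfl, rfl, rfl⟩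
      refine List.isChain_cons_cons.mpr ⟨?_, List.isChain_singleton _⟩
      rintro ⟨hx, hy⟩
      exact hxy (hx.trans hy.symm)
  have hbdd : ∀ x y : Option σ, BddBelow (S x y) := by
    intro x y
    refine ⟨0, ?_⟩
    rintro w ⟨W, hW, _, _, hw⟩
    exact hw ▸ ww_nonneg γ harc W hW
  have key : ∀ x y : Option σ, walkDist γ x y ≤ walkDist γ y x := by
    intro x y
    refine le_csInf (hne y x) ?_
    rintro w ⟨W, hW, hh, hl, hw⟩
    obtain ⟨W', hW', hh', hl', hle⟩ := rev_walk γ h1 h4 W hW y x hh hl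
    calc walkDist γ x y ≤ walkWeight γ W' :=
          csInf_le (hbdd x y) ⟨W', hW', hh', hl', rfl⟩
      _ ≤ w := hw ▸ hle
  exact fun x y => le_antisymm (key x y) (key y x)
end

section
/- For every scoring matrix γ: edist_γ(s,t) > 0 for all s ≠ t ∈ Σ* if and only if γ(a,a) ≥ 0 for all a ∈ Σ, and γ(a,b) > 0, γ(a,‐) > 0, γ(‐,a) > 0 for all distinct a,b ∈ Σ. -/
open List

/-!
Necessity: the one-column alignment `[x, y]` aligns `x.toList` with `y.toList`, so `γ x y > 0`
whenever `x ≠ y`; and the column `a a ⋯ a` of length `n + 1` together with an insertion of `a`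
aligns `a` with `a a` at cost `n γ(a,a) + γ(‐,a)`, which stays positive for every `n` only if
`γ(a,a) ≥ 0`.

Sufficiency: if `s ≠ t`, some column of an extended alignment starts and ends with different
symbols, hence contains an arc `(x, y)` with `x ≠ y`. Over a finite alphabet such arcs cost at
least some `m > 0`, and all arcs cost at least `0`, so every alignment scores at least `m`.
-/

theorem List.IsChain.rel_of_mem_zip_tail {α : Type*} {R : α → α → Prop} :
    ∀ {l : List α}, IsChain R l → ∀ {a b : α}, (a, b) ∈ l.zip l.tail → R a b
  | [], _, _, _, hab => by simp at hab
  | [_], _, _, _, hab => by simp at hab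
  | x :: y :: l, h, a, b, hab => by
    rw [isChain_cons_cons] at h
    simp only [tail_cons, zip_cons_cons, mem_cons, Prod.mk.injEq] at hab
    rcases hab with ⟨rfl, rfl⟩ | hab
    · exact h.1
    · exact h.2.rel_of_mem_zip_tail hab

theorem List.exists_mem_zip_tail_ne {α : Type*} :
    ∀ {l : List α}, l.head? ≠ l.getLast? → ∃ p ∈ l.zip l.tail, p.1 ≠ p.2
  | [], h => absurd rfl h
  | [_], h => absurd rfl h
  | a :: b :: l, h => by
    by_cases hab : a = b
    · subst hab
      obtain ⟨p, hp, hne⟩ := exists_mem_zip_tail_ne (l := a :: l) (by simpa using h)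
      exact ⟨p, .tail _ hp, hne⟩
    · exact ⟨(a, b), by simp, hab⟩

theorem List.filterMap_cons_eq_toList_append {α β : Type*} (f : α → Option β) (a : α)
    (l : List α) : filterMap f (a :: l) = (f a).toList ++ filterMap f l := by
  cases h : f a <;> simp [h]

theorem Finite.exists_pos_le {α : Type*} [Finite α] {p : α → Prop} {f : α → ℝ}
    (hf : ∀ a, p a → 0 < f a) : ∃ m > 0, ∀ a, p a → m ≤ f a := by
  rcases {a | p a}.eq_empty_or_nonempty with hempty | hne
  · exact ⟨1, one_pos, fun a ha => (hempty.subset ha).elim⟩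
  · obtain ⟨a, ha, hmin⟩ := Set.exists_min_image _ f (Set.toFinite _) hne
    exact ⟨f a, hf a ha, hmin⟩

section EditDistanceCharacterization

variable {σ : Type*}

section Walks

variable (γ : Scoring σ)

@[simp]
lemma walkWeight_singleton (x : Option σ) : walkWeight γ [x] = 0 := by
  simp [walkWeight]

@[simp]
lemma walkWeight_cons_cons (x y : Option σ) (W : List (Option σ)) :
    walkWeight γ (x :: y :: W) = γ x y + walkWeight γ (y :: W) := by
  simp [walkWeight]

lemma walkWeight_replicate (x : Option σ) :
    ∀ n : ℕ, walkWeight γ (replicate (n + 1) x) = n * γ x x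
  | 0 => by simp
  | n + 1 => by
    rw [replicate_succ, replicate_succ, walkWeight_cons_cons, ← replicate_succ,
      walkWeight_replicate x n]
    push_cast
    ring

variable {γ}

lemma IsWalkSeq.arc_weight_nonneg (hγ : ∀ x y, ¬(x = none ∧ y = none) → 0 ≤ γ x y)
    {W : List (Option σ)} (hW : IsWalkSeq W) :
    ∀ w ∈ (W.zip W.tail).map (fun p => γ p.1 p.2), 0 ≤ w := by
  intro w hw
  obtain ⟨⟨x, y⟩, hxy, rfl⟩ := mem_map.1 hw
  exact hγ x y (hW.rel_of_mem_zip_tail hxy)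

lemma walkWeight_nonneg (hγ : ∀ x y, ¬(x = none ∧ y = none) → 0 ≤ γ x y)
    {W : List (Option σ)} (hW : IsWalkSeq W) : 0 ≤ walkWeight γ W :=
  sum_nonneg (hW.arc_weight_nonneg hγ)

lemma le_walkWeight_of_mem_zip_tail (hγ : ∀ x y, ¬(x = none ∧ y = none) → 0 ≤ γ x y)
    {W : List (Option σ)} (hW : IsWalkSeq W) {x y : Option σ} (hxy : (x, y) ∈ W.zip W.tail) :
    γ x y ≤ walkWeight γ W :=
  single_le_sum (hW.arc_weight_nonneg hγ) _ (mem_map.2 ⟨(x, y), hxy, rfl⟩)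

end Walks

lemma isExtCol_pair {x y : Option σ} (h : ¬(x = none ∧ y = none)) : IsExtCol [x, y] := by
  refine ⟨by simp, ?_, isChain_pair.2 h, by simpa using h⟩
  cases x <;> simp_all

lemma isExtCol_replicate (a : σ) (n : ℕ) : IsExtCol (replicate (n + 1) (some a)) :=
  ⟨by simp, ⟨some a, by simp, by simp⟩, isChain_replicate_of_rel _ (by simp),
    by simp [head?_replicate]⟩

lemma IsExtAlignment.nil : IsExtAlignment ([] : List (List (Option σ))) [] [] := by
  simp [IsExtAlignment]

lemma IsExtAlignment.cons {c : List (Option σ)} {E : List (List (Option σ))} {s t : List σ}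
    (hc : IsExtCol c) (hE : IsExtAlignment E s t) :
    IsExtAlignment (c :: E) ((c.head?.bind id).toList ++ s)
      ((c.getLast?.bind id).toList ++ t) := by
  obtain ⟨hcols, hs, ht⟩ := hE
  refine ⟨?_, ?_, ?_⟩
  · simpa [hc] using hcols
  · rw [filterMap_cons_eq_toList_append, hs]
  · rw [filterMap_cons_eq_toList_append, ht]

lemma exists_isExtAlignment : ∀ s t : List σ, ∃ E, IsExtAlignment E s t
  | [], [] => ⟨[], .nil⟩
  | [], b :: t => by
    obtain ⟨E, hE⟩ := exists_isExtAlignment [] t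
    exact ⟨_, by
      simpa using IsExtAlignment.cons (isExtCol_pair (x := none) (y := some b) (by simp)) hE⟩
  | a :: s, t => by
    obtain ⟨E, hE⟩ := exists_isExtAlignment s t
    exact ⟨_, by
      simpa using IsExtAlignment.cons (isExtCol_pair (x := some a) (y := none) (by simp)) hE⟩

lemma IsExtAlignment.exists_head?_ne_getLast? {E : List (List (Option σ))} {s t : List σ}
    (hE : IsExtAlignment E s t) (hst : s ≠ t) : ∃ c ∈ E, c.head? ≠ c.getLast? := by
  by_contra! hall
  exact hst (by rw [← hE.2.1, ← hE.2.2, filterMap_congr fun c hc => by rw [hall c hc]])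

variable {γ : Scoring σ} {s t : List σ}

lemma edist_nonpos_of_isExtAlignment {E : List (List (Option σ))} (hE : IsExtAlignment E s t)
    (h : (E.map (walkWeight γ)).sum ≤ 0) : edist γ s t ≤ 0 := by
  by_cases hb : BddBelow {x | ∃ E, IsExtAlignment E s t ∧ (E.map (walkWeight γ)).sum = x}
  · exact (csInf_le hb ⟨E, hE, rfl⟩).trans h
  · exact (Real.sInf_of_not_bddBelow hb).le

lemma le_edist {m : ℝ}
    (h : ∀ E, IsExtAlignment E s t → m ≤ (E.map (walkWeight γ)).sum) : m ≤ edist γ s t := by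
  obtain ⟨E, hE⟩ := exists_isExtAlignment s t
  exact le_csInf ⟨_, E, hE, rfl⟩ fun _ ⟨E, hE, hx⟩ => hx ▸ h E hE

lemma sum_walkWeight_pos_of_edist_pos (h : ∀ s t : List σ, s ≠ t → 0 < edist γ s t)
    {E : List (List (Option σ))} (hE : IsExtAlignment E s t) (hst : s ≠ t) :
    0 < (E.map (walkWeight γ)).sum :=
  lt_of_not_ge fun hle => (h s t hst).not_ge (edist_nonpos_of_isExtAlignment hE hle)

lemma pos_of_ne_of_edist_pos (h : ∀ s t : List σ, s ≠ t → 0 < edist γ s t) {x y : Option σ}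
    (hxy : x ≠ y) : 0 < γ x y := by
  have hcol : IsExtCol [x, y] := isExtCol_pair fun ⟨hx, hy⟩ => hxy (hx.trans hy.symm)
  have hst : x.toList ≠ y.toList := fun h' => hxy (by cases x <;> cases y <;> simp_all)
  have hE : IsExtAlignment [[x, y]] x.toList y.toList := by
    simpa using IsExtAlignment.cons hcol .nil
  simpa using sum_walkWeight_pos_of_edist_pos h hE hst

lemma diag_nonneg_of_edist_pos (h : ∀ s t : List σ, s ≠ t → 0 < edist γ s t) (a : σ) :
    0 ≤ γ (some a) (some a) := by
  by_contra! hneg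
  obtain ⟨n, hn⟩ := Archimedean.arch (γ none (some a)) (neg_pos.2 hneg)
  have hE : IsExtAlignment [replicate (n + 1) (some a), [none, some a]] [a] [a, a] := by
    simpa [head?_replicate, getLast?_replicate, Option.toList] using
      IsExtAlignment.cons (isExtCol_replicate a n)
        (IsExtAlignment.cons (isExtCol_pair (by simp)) .nil)
  have hpos := sum_walkWeight_pos_of_edist_pos h hE (by simp)
  simp only [map_cons, map_nil, sum_cons, sum_nil, walkWeight_replicate, walkWeight_cons_cons,
    walkWeight_singleton] at hpos
  rw [nsmul_eq_mul] at hn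
  linarith

lemma le_sum_walkWeight_of_ne (hγ : ∀ x y, ¬(x = none ∧ y = none) → 0 ≤ γ x y) {m : ℝ}
    (hm : ∀ x y : Option σ, x ≠ y → m ≤ γ x y) {E : List (List (Option σ))}
    (hE : IsExtAlignment E s t) (hst : s ≠ t) : m ≤ (E.map (walkWeight γ)).sum := by
  obtain ⟨c, hcE, hc⟩ := hE.exists_head?_ne_getLast? hst
  obtain ⟨⟨x, y⟩, hxy, hne⟩ := exists_mem_zip_tail_ne hc
  have hwalk : ∀ c ∈ E, IsWalkSeq c := fun c hc => (hE.1 c hc).2.2.1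
  calc m ≤ γ x y := hm x y hne
    _ ≤ walkWeight γ c := le_walkWeight_of_mem_zip_tail hγ (hwalk c hcE) hxy
    _ ≤ (E.map (walkWeight γ)).sum := single_le_sum
        (fun _ hw => by
          obtain ⟨c, hc, rfl⟩ := mem_map.1 hw
          exact walkWeight_nonneg hγ (hwalk c hc))
        _ (mem_map_of_mem hcE)

end EditDistanceCharacterization

theorem stmt17 {σ : Type*} [Fintype σ] (γ : Scoring σ) :
    (∀ s t : List σ, s ≠ t → 0 < edist γ s t) ↔
      ((∀ a : σ, 0 ≤ γ (some a) (some a)) ∧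
       (∀ a b : σ, a ≠ b → 0 < γ (some a) (some b)) ∧
       (∀ a : σ, 0 < γ (some a) none) ∧
       (∀ a : σ, 0 < γ none (some a))) := by
  constructor
  · intro h
    exact ⟨diag_nonneg_of_edist_pos h, fun a b hab => pos_of_ne_of_edist_pos h (by simpa),
      fun a => pos_of_ne_of_edist_pos h (by simp), fun a => pos_of_ne_of_edist_pos h (by simp)⟩
  · rintro ⟨hdiag, hsub, hdel, hins⟩ s t hst
    have hoff : ∀ x y : Option σ, x ≠ y → 0 < γ x y := by
      rintro (_ | a) (_ | b) hxy
      exacts [absurd rfl hxy, hins b, hdel a, hsub a b (by simpa using hxy)]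
    have harc : ∀ x y : Option σ, ¬(x = none ∧ y = none) → 0 ≤ γ x y := by
      intro x y hxy
      rcases eq_or_ne x y with rfl | hne
      · obtain ⟨a, rfl⟩ := Option.ne_none_iff_exists'.1 fun hx => hxy ⟨hx, hx⟩
        exact hdiag a
      · exact (hoff x y hne).le
    obtain ⟨m, hm, hmle⟩ := Finite.exists_pos_le (p := fun p : Option σ × Option σ => p.1 ≠ p.2)
      (f := fun p => γ p.1 p.2) fun p => hoff p.1 p.2
    exact hm.trans_le (le_edist fun E hE =>
      le_sum_walkWeight_of_ne harc (fun x y => hmle (x, y)) hE hst)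
end
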